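/- arXiv:2311.11110 — 2 statements merged into one kernel-verified Lean document; each statement's English description precedes it below -/
import Mathlib

section
/- Let $a_1,\dots,a_r \geq 2$ be integers with $\sum_{i=1}^r 1/a_i = r-2$, and set $\mu_A = 2 + \sum_i(a_i-1)$. Define $F(A) := \frac{\mu_A!}{\prod_i a_i!} \prod_i a_i^{a_i}$ and for $1 \le j \le a_i - 1$ let $A_{i,j}$ replace $a_i$ by $a_i - j$, $\mu_{A_{i,j}} = \mu_A - j$, and $e_{dom}(A_{i,j}) := \frac{(\mu_A - j)!}{(a_i-j)! \prod_{k\neq i} a_k!} \cdot \frac{a_i(a_i-j)}{j} \cdot (a_i - j)^{a_i - j} \prod_{k \neq i} a_k^{a_k}$. Then $\sum_{i=1}^r \sum_{j=1}^{a_i-1} \binom{\mu_A - 1}{j - 1} \cdot e_{dom}(A_{i,j}) \cdot j^{j-2} \cdot a_i = F(A) \cdot \frac{\sum_{i=1}^r a_i^2(a_i - 1)}{2\mu_A}$, as rationals (with $j^{j-2}$ meaning $j^{j-1}/j$, so equal to $1$ when $j=1$). -/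
open Finset Nat

lemma nat_inv_le_inv {m n : ℕ} (hm : 0 < m) (h : m ≤ n) : (n : ℚ)⁻¹ ≤ (m : ℚ)⁻¹ := by
  have h1 : (0:ℚ) < m := by exact_mod_cast hm
  have h2 : (m:ℚ) ≤ n := by exact_mod_cast h
  exact inv_anti₀ h1 h2

lemma bnd_six (x y z : ℕ) (hx : 2 ≤ x) (hy : 2 ≤ y) (hz : 2 ≤ z)
    (h : (x:ℚ)⁻¹ + (y:ℚ)⁻¹ + (z:ℚ)⁻¹ = 1) : x ≤ 6 := by
  by_contra h7
  push_neg at h7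
  have hx7 : (x:ℚ)⁻¹ ≤ (7:ℚ)⁻¹ := by
    have := nat_inv_le_inv (show 0 < 7 by norm_num) h7
    simpa using this
  have hy2 : (y:ℚ)⁻¹ ≤ (2:ℚ)⁻¹ := by
    have := nat_inv_le_inv (show 0 < 2 by norm_num) hy
    simpa using this
  have hz2 : (z:ℚ)⁻¹ ≤ (2:ℚ)⁻¹ := by
    have := nat_inv_le_inv (show 0 < 2 by norm_num) hz
    simpa using this
  rcases Nat.lt_or_ge y 3 with hy3 | hy3
  · have hyy : y = 2 := by omega
    subst hyy
    rcases Nat.lt_or_ge z 3 with hz3 | hz3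
    · have hzz : z = 2 := by omega
      subst hzz
      have hxpos : (0:ℚ) < (x:ℚ)⁻¹ := by
        have : (0:ℚ) < x := by exact_mod_cast (by omega : 0 < x)
        positivity
      norm_num at h
      linarith
    · have hz3' : (z:ℚ)⁻¹ ≤ (3:ℚ)⁻¹ := by
        have := nat_inv_le_inv (show 0 < 3 by norm_num) hz3
        simpa using this
      norm_num at *
      linarith
  · have hy3' : (y:ℚ)⁻¹ ≤ (3:ℚ)⁻¹ := by
      have := nat_inv_le_inv (show 0 < 3 by norm_num) hy3
      simpa using this
    norm_num at *
    linarith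

set_option maxHeartbeats 4000000 in
/-- The combinatorial content of the recursion for the number of full exceptional
collections: for integers `a_1,…,a_r ≥ 2` with `∑ 1/a_i = r - 2` and
`μ_A = 2 + ∑ (a_i - 1)`,
`∑_i ∑_{j=1}^{a_i-1} C(μ_A-1, j-1) · e_dom(A_{i,j}) · j^(j-2) · a_i
  = (μ_A!/∏ a_i!) ∏ a_i^{a_i} · (∑ a_i²(a_i-1))/(2μ_A)`,
where `e_dom(A_{i,j}) = (μ_A-j)!/((a_i-j)! ∏_{k≠i} a_k!) · a_i(a_i-j)/j ·
(a_i-j)^(a_i-j) ∏_{k≠i} a_k^{a_k}` and `j^(j-2)` means `j^(j-1)/j`. -/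
theorem recursion_identity (r : ℕ) (a : Fin r → ℕ) (ha : ∀ i, 2 ≤ a i)
    (hχ : ∑ i, (a i : ℚ)⁻¹ = (r : ℚ) - 2) :
    (∑ i, ∑ j ∈ Finset.Icc 1 (a i - 1),
      ((2 + ∑ k, (a k - 1) - 1).choose (j - 1) : ℚ) *
        ((((2 + ∑ k, (a k - 1) - j)! : ℚ) /
            (((a i - j)! : ℚ) * ∏ k ∈ Finset.univ.erase i, ((a k)! : ℚ))) *
          ((a i : ℚ) * ((a i : ℚ) - (j : ℚ)) / (j : ℚ)) *
          ((a i : ℚ) - (j : ℚ)) ^ (a i - j) *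
          ∏ k ∈ Finset.univ.erase i, (a k : ℚ) ^ (a k)) *
        ((j : ℚ) ^ (j - 1) / (j : ℚ)) * (a i : ℚ)) =
    (((2 + ∑ k, (a k - 1))! : ℚ) / ∏ k, ((a k)! : ℚ)) *
      (∏ k, (a k : ℚ) ^ (a k)) *
      ((∑ i, (a i : ℚ) ^ 2 * ((a i : ℚ) - 1)) /
        (2 * (2 + ∑ k, ((a k : ℚ) - 1)))) := by
  have hpos : ∀ i, (0:ℚ) < (a i : ℚ)⁻¹ := by
    intro i
    have h1 : 0 < a i := by have := ha i; omega
    have h2 : (0:ℚ) < (a i : ℚ) := by exact_mod_cast h1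
    positivity
  have hinv : ∀ i, (a i : ℚ)⁻¹ ≤ 1/2 := by
    intro i
    have := nat_inv_le_inv (show 0 < 2 by norm_num) (ha i)
    simpa [one_div] using this
  -- r ≤ 4
  have hr4 : r ≤ 4 := by
    have hsum : ∑ i, (a i : ℚ)⁻¹ ≤ (r : ℚ) * (1/2) := by
      calc ∑ i, (a i : ℚ)⁻¹ ≤ ∑ _i : Fin r, (1/2 : ℚ) :=
            Finset.sum_le_sum (fun i _ => hinv i)
        _ = (r : ℚ) * (1/2) := by simp [Finset.sum_const, mul_comm]
    rw [hχ] at hsum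
    have : (r : ℚ) ≤ 4 := by linarith
    exact_mod_cast this
  -- 3 ≤ r
  have hr3 : 3 ≤ r := by
    rcases Nat.eq_zero_or_pos r with rfl | hr
    · norm_num at hχ
    · have hne : (Finset.univ : Finset (Fin r)).Nonempty := by
        refine ⟨⟨0, hr⟩, Finset.mem_univ _⟩
      have hp : (0:ℚ) < ∑ i, (a i : ℚ)⁻¹ :=
        Finset.sum_pos (fun i _ => hpos i) hne
      rw [hχ] at hp
      have : (2:ℚ) < r := by linarith
      exact_mod_cast this
  interval_cases r
  · -- r = 3
    have e0 : (Finset.univ.erase (0 : Fin 3)) = {1,2} := by decide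
    have e1 : (Finset.univ.erase (1 : Fin 3)) = {0,2} := by decide
    have e2 : (Finset.univ.erase (2 : Fin 3)) = {0,1} := by decide
    simp only [Fin.sum_univ_three] at hχ
    norm_num at hχ
    have h0 := ha 0
    have h1 := ha 1
    have h2 := ha 2
    have hx6 : a 0 ≤ 6 := bnd_six _ _ _ h0 h1 h2 hχ
    have hy6 : a 1 ≤ 6 := bnd_six _ _ _ h1 h0 h2 (by linarith)
    have hz6 : a 2 ≤ 6 := bnd_six _ _ _ h2 h0 h1 (by linarith)
    simp only [Fin.sum_univ_three, Fin.prod_univ_three, e0, e1, e2,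
      Finset.prod_pair (show (1:Fin 3) ≠ 2 by decide),
      Finset.prod_pair (show (0:Fin 3) ≠ 2 by decide),
      Finset.prod_pair (show (0:Fin 3) ≠ 1 by decide)] at *
    clear ha hpos hinv
    generalize hg0 : a 0 = x at *
    generalize hg1 : a 1 = y at *
    generalize hg2 : a 2 = z at *
    clear hg0 hg1 hg2
    interval_cases x <;> interval_cases y <;> interval_cases z <;>
      first
        | (exfalso; revert hχ; norm_num; done)
        | (norm_num [Finset.prod_pair (show (1:Fin 3) ≠ 2 by decide),
            Finset.prod_pair (show (0:Fin 3) ≠ 2 by decide),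
            Finset.prod_pair (show (0:Fin 3) ≠ 1 by decide),
            show (Finset.Icc 1 1 : Finset ℕ) = {1} from by decide,
            show (Finset.Icc 1 2 : Finset ℕ) = {1,2} from by decide,
            show (Finset.Icc 1 3 : Finset ℕ) = {1,2,3} from by decide,
            show (Finset.Icc 1 4 : Finset ℕ) = {1,2,3,4} from by decide,
            show (Finset.Icc 1 5 : Finset ℕ) = {1,2,3,4,5} from by decide,
            Finset.sum_insert, Finset.mem_insert, Nat.factorial, Nat.choose])
  · -- r = 4
    have h2 : ∀ i, a i = 2 := by
      have hs : ∑ i : Fin 4, ((1:ℚ)/2 - (a i:ℚ)⁻¹) = 0 := by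
        rw [Finset.sum_sub_distrib, hχ]
        norm_num
      intro i
      have hterm := (Finset.sum_eq_zero_iff_of_nonneg
        (fun i _ => by linarith [hinv i])).mp hs i (Finset.mem_univ i)
      have hai : (a i : ℚ)⁻¹ = (2:ℚ)⁻¹ := by
        rw [sub_eq_zero] at hterm
        rw [← hterm]
        norm_num
      have : (a i : ℚ) = 2 := by
        have := congrArg (·⁻¹) hai
        simpa using this
      exact_mod_cast this
    simp only [h2]
    norm_num [Finset.sum_const, Finset.card_univ, Finset.prod_const,
      Finset.card_erase_of_mem, Finset.mem_univ,
      show (Finset.Icc 1 1 : Finset ℕ) = {1} from by decide,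
      Nat.factorial]
end

section
/- For all positive integers $n$ and real $x$, $\frac{n(n-1)}{2} x^{n-1} = n x^n - n x^{n-1} - \sum_{j=1}^{n} \binom{n}{j} (x-j)^{n-j+1} j^{j-2}$, where $j^{j-2}$ is interpreted as $j^{j-1}/j$ (so terms are rational multiples of real powers, valid as an identity of real-valued functions, equivalently an identity after multiplying through by $\mathrm{lcm}$ of the $j$'s). -/
open Finset

/-- Finite differences: alternating sum of `C(N,j) j^k` vanishes for `k < N`. -/
lemma alt_sum_pow (N : ℕ) : ∀ k : ℕ, k < N →
    ∑ j ∈ range (N + 1), (-1 : ℝ) ^ j * (N.choose j : ℝ) * (j : ℝ) ^ k = 0 := by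
  induction N with
  | zero => intro k hk; omega
  | succ N ih =>
    intro k hk
    cases k with
    | zero =>
      have h := Int.alternating_sum_range_choose_of_ne (n := N + 1) (Nat.succ_ne_zero N)
      have h2 : ((∑ i ∈ range (N + 2), (-1 : ℤ) ^ i * ((N + 1).choose i : ℤ) : ℤ) : ℝ) = 0 := by
        rw [h]; norm_num
      push_cast at h2
      simpa using h2
    | succ k =>
      rw [Finset.sum_range_succ']
      have hz : (-1 : ℝ) ^ 0 * (((N + 1).choose 0 : ℕ) : ℝ) * ((0 : ℕ) : ℝ) ^ (k + 1) = 0 := by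
        simp
      rw [hz, add_zero]
      have step : ∀ i ∈ range (N + 1),
          (-1 : ℝ) ^ (i + 1) * (((N + 1).choose (i + 1) : ℕ) : ℝ) * ((i + 1 : ℕ) : ℝ) ^ (k + 1)
            = ∑ t ∈ range (k + 1),
              (-(N + 1 : ℝ)) * (k.choose t : ℝ) *
                ((-1 : ℝ) ^ i * (N.choose i : ℝ) * (i : ℝ) ^ t) := by
        intro i _
        have hc : (((N + 1).choose (i + 1) : ℕ) : ℝ) * ((i : ℝ) + 1)
            = ((N : ℝ) + 1) * (N.choose i : ℝ) := by
          have h' := congrArg (Nat.cast : ℕ → ℝ) (Nat.add_one_mul_choose_eq N i)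
          push_cast at h'
          linarith [h']
        have hbin : ((i : ℝ) + 1) ^ k
            = ∑ t ∈ range (k + 1), (i : ℝ) ^ t * (1 : ℝ) ^ (k - t) * (k.choose t : ℝ) :=
          add_pow (i : ℝ) 1 k
        have hpow : ((i + 1 : ℕ) : ℝ) ^ (k + 1) = ((i : ℝ) + 1) * ((i : ℝ) + 1) ^ k := by
          push_cast; rw [pow_succ]; ring
        rw [hpow, hbin, Finset.mul_sum, Finset.mul_sum]
        apply Finset.sum_congr rfl
        intro t _
        calc (-1 : ℝ) ^ (i + 1) * (((N + 1).choose (i + 1) : ℕ) : ℝ) *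
              (((i : ℝ) + 1) * ((i : ℝ) ^ t * (1 : ℝ) ^ (k - t) * (k.choose t : ℝ)))
            = ((((N + 1).choose (i + 1) : ℕ) : ℝ) * ((i : ℝ) + 1)) *
              ((-1 : ℝ) ^ (i + 1) * ((i : ℝ) ^ t * (1 : ℝ) ^ (k - t) * (k.choose t : ℝ))) := by
              ring
          _ = (((N : ℝ) + 1) * (N.choose i : ℝ)) *
              ((-1 : ℝ) ^ (i + 1) * ((i : ℝ) ^ t * (1 : ℝ) ^ (k - t) * (k.choose t : ℝ))) := by
              rw [hc]
          _ = (-(N + 1 : ℝ)) * (k.choose t : ℝ) *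
              ((-1 : ℝ) ^ i * (N.choose i : ℝ) * (i : ℝ) ^ t) := by
              rw [pow_succ, one_pow]; ring
      rw [Finset.sum_congr rfl step, Finset.sum_comm]
      apply Finset.sum_eq_zero
      intro t ht
      rw [← Finset.mul_sum, ih t (by simp only [Finset.mem_range] at ht; omega), mul_zero]

/-- Binomial expansion of the Abel-type sum into powers of `x`. -/
lemma expand_sum (n : ℕ) (w : ℕ → ℝ) (x : ℝ) :
    ∑ j ∈ Icc 1 n, (n.choose j : ℝ) * (x - (j : ℝ)) ^ (n - j) * w j
      = ∑ m ∈ range (n + 1),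
          (∑ j ∈ Icc 1 n,
            (n.choose j : ℝ) * ((n - j).choose m : ℝ) * (-(j : ℝ)) ^ (n - j - m) * w j) * x ^ m := by
  have h1 : ∀ j ∈ Icc 1 n, (n.choose j : ℝ) * (x - (j : ℝ)) ^ (n - j) * w j
      = ∑ m ∈ range (n + 1),
          (n.choose j : ℝ) * ((n - j).choose m : ℝ) * (-(j : ℝ)) ^ (n - j - m) * w j * x ^ m := by
    intro j hj
    have hx : (x - (j : ℝ)) ^ (n - j)
        = ∑ m ∈ range (n + 1), x ^ m * (-(j : ℝ)) ^ (n - j - m) * ((n - j).choose m : ℝ) := by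
      rw [sub_eq_add_neg, add_pow]
      apply Finset.sum_subset (Finset.range_subset_range.2 (by omega))
      intro m hm hm'
      simp only [Finset.mem_range] at hm hm'
      rw [Nat.choose_eq_zero_of_lt (by omega)]
      simp
    rw [hx, Finset.mul_sum, Finset.sum_mul]
    exact Finset.sum_congr rfl fun m _ => by ring
  rw [Finset.sum_congr rfl h1, Finset.sum_comm]
  exact Finset.sum_congr rfl fun m _ => (Finset.sum_mul _ _ _).symm

/-- Evaluation of the inner alternating sum over `Icc 1 n`. -/
lemma aux_eval (n N e : ℕ) (hNn : N ≤ n) (he : 1 ≤ e) (heN : e < N) :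
    ∑ j ∈ Icc 1 n, (-1 : ℝ) ^ j * (N.choose j : ℝ) * (j : ℝ) ^ e = 0 := by
  have e1 : ∑ j ∈ Icc 1 N, (-1 : ℝ) ^ j * (N.choose j : ℝ) * (j : ℝ) ^ e
      = ∑ j ∈ Icc 1 n, (-1 : ℝ) ^ j * (N.choose j : ℝ) * (j : ℝ) ^ e := by
    apply Finset.sum_subset (Finset.Icc_subset_Icc_right hNn)
    intro j hj hj'
    simp only [Finset.mem_Icc] at hj hj'
    rw [Nat.choose_eq_zero_of_lt (by omega)]
    simp
  have e2 : ∑ j ∈ Icc 1 N, (-1 : ℝ) ^ j * (N.choose j : ℝ) * (j : ℝ) ^ e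
      = ∑ j ∈ range (N + 1), (-1 : ℝ) ^ j * (N.choose j : ℝ) * (j : ℝ) ^ e := by
    apply Finset.sum_subset
    · intro j hj
      simp only [Finset.mem_Icc] at hj
      simp only [Finset.mem_range]
      omega
    · intro j hj hj'
      simp only [Finset.mem_range] at hj
      simp only [Finset.mem_Icc] at hj'
      have hj0 : j = 0 := by omega
      subst hj0
      simp [zero_pow (by omega : e ≠ 0)]
  rw [← e1, e2, alt_sum_pow N e heN]

/-- Key choose/sign/power pointwise identity. -/
lemma pointwise (n m j e : ℕ) (hj1 : 1 ≤ j) (hjn : j ≤ n) (c : ℝ)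
    (hc : j + m ≤ n → (j : ℝ) ^ (n - j - m) * c = (j : ℝ) ^ e) :
    (n.choose j : ℝ) * ((n - j).choose m : ℝ) * (-(j : ℝ)) ^ (n - j - m) * c
      = (-1 : ℝ) ^ (n - m) * (n.choose m : ℝ) *
        ((-1 : ℝ) ^ j * ((n - m).choose j : ℝ) * (j : ℝ) ^ e) := by
  by_cases h : j + m ≤ n
  · have h1 := Nat.choose_mul (n := n) (k := j + m) (s := j) (Nat.le_add_right j m)
    have h2 := Nat.choose_mul (n := n) (k := j + m) (s := m) (Nat.le_add_left m j)
    have e1 : j + m - j = m := by omega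
    have e2 : j + m - m = j := by omega
    rw [e1] at h1
    rw [e2] at h2
    have hcc : n.choose j * (n - j).choose m = n.choose m * (n - m).choose j := by
      rw [← h1, Nat.choose_symm_add, h2]
    have hcast : (n.choose j : ℝ) * ((n - j).choose m : ℝ)
        = (n.choose m : ℝ) * ((n - m).choose j : ℝ) := by
      exact_mod_cast congrArg (Nat.cast : ℕ → ℝ) hcc
    have hneg : (-(j : ℝ)) ^ (n - j - m) = (-1 : ℝ) ^ (n - j - m) * (j : ℝ) ^ (n - j - m) := by
      rw [neg_pow]
    have hsq : (-1 : ℝ) ^ j * (-1 : ℝ) ^ j = 1 := by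
      rw [← mul_pow]; norm_num
    have hsign : (-1 : ℝ) ^ (n - j - m) = (-1 : ℝ) ^ (n - m) * (-1 : ℝ) ^ j := by
      have ha : (-1 : ℝ) ^ (n - j - m) * (-1 : ℝ) ^ j = (-1 : ℝ) ^ (n - m) := by
        rw [← pow_add]
        congr 1
        omega
      calc (-1 : ℝ) ^ (n - j - m)
          = (-1 : ℝ) ^ (n - j - m) * ((-1 : ℝ) ^ j * (-1 : ℝ) ^ j) := by rw [hsq, mul_one]
        _ = ((-1 : ℝ) ^ (n - j - m) * (-1 : ℝ) ^ j) * (-1 : ℝ) ^ j := by ring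
        _ = (-1 : ℝ) ^ (n - m) * (-1 : ℝ) ^ j := by rw [ha]
    rw [hneg, hsign]
    calc (n.choose j : ℝ) * ((n - j).choose m : ℝ) *
          ((-1 : ℝ) ^ (n - m) * (-1 : ℝ) ^ j * (j : ℝ) ^ (n - j - m)) * c
        = ((n.choose j : ℝ) * ((n - j).choose m : ℝ)) * ((-1 : ℝ) ^ (n - m) * (-1 : ℝ) ^ j) *
          ((j : ℝ) ^ (n - j - m) * c) := by ring
      _ = ((n.choose m : ℝ) * ((n - m).choose j : ℝ)) * ((-1 : ℝ) ^ (n - m) * (-1 : ℝ) ^ j) *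
          (j : ℝ) ^ e := by rw [hcast, hc h]
      _ = (-1 : ℝ) ^ (n - m) * (n.choose m : ℝ) *
          ((-1 : ℝ) ^ j * ((n - m).choose j : ℝ) * (j : ℝ) ^ e) := by ring
  · rw [Nat.choose_eq_zero_of_lt (show n - j < m by omega),
        Nat.choose_eq_zero_of_lt (show n - m < j by omega)]
    simp

/-- Coefficient evaluation for weight `j^(j-1)`. -/
lemma coeff1 (n m : ℕ) (hn : 1 ≤ n) (hm : m ≤ n) :
    ∑ j ∈ Icc 1 n,
        (n.choose j : ℝ) * ((n - j).choose m : ℝ) * (-(j : ℝ)) ^ (n - j - m) * (j : ℝ) ^ (j - 1)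
      = if m = n - 1 then (n : ℝ) else 0 := by
  by_cases h0 : m = n
  · rw [if_neg (by omega)]
    apply Finset.sum_eq_zero
    intro j hj
    simp only [Finset.mem_Icc] at hj
    rw [Nat.choose_eq_zero_of_lt (show n - j < m by omega)]
    simp
  by_cases h1 : m = n - 1
  · rw [if_pos h1]
    rw [Finset.sum_eq_single 1]
    · have hnm : n - 1 - m = 0 := by omega
      have hn1 : n - 1 = m := by omega
      simp [hnm, hn1, Nat.choose_one_right]
    · intro j hj hj1
      simp only [Finset.mem_Icc] at hj
      rw [Nat.choose_eq_zero_of_lt (show n - j < m by omega)]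
      simp
    · intro h
      exact absurd (Finset.mem_Icc.2 ⟨le_refl 1, hn⟩) h
  · rw [if_neg h1]
    have hN : 2 ≤ n - m := by omega
    have hpt : ∀ j ∈ Icc 1 n,
        (n.choose j : ℝ) * ((n - j).choose m : ℝ) * (-(j : ℝ)) ^ (n - j - m) * (j : ℝ) ^ (j - 1)
          = (-1 : ℝ) ^ (n - m) * (n.choose m : ℝ) *
            ((-1 : ℝ) ^ j * ((n - m).choose j : ℝ) * (j : ℝ) ^ (n - m - 1)) := by
      intro j hj
      simp only [Finset.mem_Icc] at hj
      apply pointwise n m j (n - m - 1) hj.1 hj.2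
      intro h
      rw [← pow_add]
      congr 1
      omega
    rw [Finset.sum_congr rfl hpt, ← Finset.mul_sum,
      aux_eval n (n - m) (n - m - 1) (by omega) (by omega) (by omega), mul_zero]

/-- Coefficient evaluation for weight `j^(j-1)/j`. -/
lemma coeff2 (n m : ℕ) (hn : 1 ≤ n) (hm : m ≤ n) :
    ∑ j ∈ Icc 1 n,
        (n.choose j : ℝ) * ((n - j).choose m : ℝ) * (-(j : ℝ)) ^ (n - j - m) *
          ((j : ℝ) ^ (j - 1) / (j : ℝ))
      = if m = n - 1 then (n : ℝ) else if m + 2 = n then -(n.choose 2 : ℝ) else 0 := by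
  by_cases h0 : m = n
  · rw [if_neg (by omega), if_neg (by omega)]
    apply Finset.sum_eq_zero
    intro j hj
    simp only [Finset.mem_Icc] at hj
    rw [Nat.choose_eq_zero_of_lt (show n - j < m by omega)]
    simp
  by_cases h1 : m = n - 1
  · rw [if_pos h1]
    rw [Finset.sum_eq_single 1]
    · have hnm : n - 1 - m = 0 := by omega
      have hn1 : n - 1 = m := by omega
      simp [hnm, hn1, Nat.choose_one_right]
    · intro j hj hj1
      simp only [Finset.mem_Icc] at hj
      rw [Nat.choose_eq_zero_of_lt (show n - j < m by omega)]
      simp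
    · intro h
      exact absurd (Finset.mem_Icc.2 ⟨le_refl 1, hn⟩) h
  · rw [if_neg h1]
    have hN : 2 ≤ n - m := by omega
    have hpt : ∀ j ∈ Icc 1 n,
        (n.choose j : ℝ) * ((n - j).choose m : ℝ) * (-(j : ℝ)) ^ (n - j - m) *
            ((j : ℝ) ^ (j - 1) / (j : ℝ))
          = (-1 : ℝ) ^ (n - m) * (n.choose m : ℝ) *
            ((-1 : ℝ) ^ j * ((n - m).choose j : ℝ) * (j : ℝ) ^ (n - m - 2)) := by
      intro j hj
      simp only [Finset.mem_Icc] at hj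
      apply pointwise n m j (n - m - 2) hj.1 hj.2
      intro h
      have hj0 : (j : ℝ) ≠ 0 := Nat.cast_ne_zero.2 (by omega)
      have hb : (j : ℝ) ^ (n - j - m) * (j : ℝ) ^ (j - 1) = (j : ℝ) ^ (n - m - 2) * (j : ℝ) := by
        rw [← pow_add, ← pow_succ]
        congr 1
        omega
      field_simp
      calc (j : ℝ) ^ (n - j - m) * (j : ℝ) ^ (j - 1)
          = (j : ℝ) ^ (n - m - 2) * (j : ℝ) := hb
        _ = (j : ℝ) * (j : ℝ) ^ (n - m - 2) := by ring
    rw [Finset.sum_congr rfl hpt, ← Finset.mul_sum]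
    by_cases h2 : m + 2 = n
    · rw [if_pos h2]
      have hinner : ∑ j ∈ Icc 1 n,
          (-1 : ℝ) ^ j * ((n - m).choose j : ℝ) * (j : ℝ) ^ (n - m - 2) = -1 := by
        have hnm2 : n - m = 2 := by omega
        rw [hnm2]
        have hr : ∑ j ∈ Icc 1 2, (-1 : ℝ) ^ j * ((2 : ℕ).choose j : ℝ) * (j : ℝ) ^ (2 - 2 : ℕ)
            = ∑ j ∈ Icc 1 n, (-1 : ℝ) ^ j * ((2 : ℕ).choose j : ℝ) * (j : ℝ) ^ (2 - 2 : ℕ) := by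
          apply Finset.sum_subset (Finset.Icc_subset_Icc_right (by omega))
          intro j hj hj'
          simp only [Finset.mem_Icc] at hj hj'
          rw [Nat.choose_eq_zero_of_lt (by omega)]
          simp
        rw [← hr]
        norm_num [Finset.sum_Icc_succ_top]
      rw [hinner]
      have hsgn : (-1 : ℝ) ^ (n - m) = 1 := by
        have : n - m = 2 := by omega
        rw [this]; norm_num
      have hch : n.choose m = n.choose 2 := by
        have : m = n - 2 := by omega
        rw [this, Nat.choose_symm (by omega)]
      rw [hsgn, hch]
      ring
    · rw [if_neg h2]
      rw [aux_eval n (n - m) (n - m - 2) (by omega) (by omega) (by omega), mul_zero]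

lemma S1 (n : ℕ) (hn : 1 ≤ n) (x : ℝ) :
    ∑ j ∈ Icc 1 n, (n.choose j : ℝ) * (x - (j : ℝ)) ^ (n - j) * (j : ℝ) ^ (j - 1)
      = (n : ℝ) * x ^ (n - 1) := by
  rw [expand_sum]
  have h : ∀ m ∈ range (n + 1),
      (∑ j ∈ Icc 1 n, (n.choose j : ℝ) * ((n - j).choose m : ℝ) * (-(j : ℝ)) ^ (n - j - m) *
        (j : ℝ) ^ (j - 1)) * x ^ m
      = if m = n - 1 then (n : ℝ) * x ^ (n - 1) else 0 := by
    intro m hm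
    simp only [Finset.mem_range] at hm
    rw [coeff1 n m hn (by omega)]
    split_ifs with h'
    · rw [h']
    · rw [zero_mul]
  rw [Finset.sum_congr rfl h, Finset.sum_ite_eq' (range (n + 1)) (n - 1)]
  rw [if_pos (Finset.mem_range.2 (by omega))]

lemma S2 (n : ℕ) (hn : 2 ≤ n) (x : ℝ) :
    ∑ j ∈ Icc 1 n, (n.choose j : ℝ) * (x - (j : ℝ)) ^ (n - j) * ((j : ℝ) ^ (j - 1) / (j : ℝ))
      = (n : ℝ) * x ^ (n - 1) - (n.choose 2 : ℝ) * x ^ (n - 2) := by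
  rw [expand_sum]
  have h : ∀ m ∈ range (n + 1),
      (∑ j ∈ Icc 1 n, (n.choose j : ℝ) * ((n - j).choose m : ℝ) * (-(j : ℝ)) ^ (n - j - m) *
        ((j : ℝ) ^ (j - 1) / (j : ℝ))) * x ^ m
      = (if m = n - 1 then (n : ℝ) * x ^ (n - 1) else 0)
        + (if m = n - 2 then -(n.choose 2 : ℝ) * x ^ (n - 2) else 0) := by
    intro m hm
    simp only [Finset.mem_range] at hm
    rw [coeff2 n m (by omega) (by omega)]
    by_cases ha : m = n - 1
    · rw [if_pos ha, if_pos ha, if_neg (by omega), ha, add_zero]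
    · rw [if_neg ha, if_neg ha, zero_add]
      by_cases hb : m + 2 = n
      · rw [if_pos hb, if_pos (by omega : m = n - 2)]
        have : m = n - 2 := by omega
        rw [this]
      · rw [if_neg hb, if_neg (by omega : ¬ m = n - 2), zero_mul]
  rw [Finset.sum_congr rfl h, Finset.sum_add_distrib,
    Finset.sum_ite_eq' (range (n + 1)) (n - 1), Finset.sum_ite_eq' (range (n + 1)) (n - 2),
    if_pos (Finset.mem_range.2 (by omega)), if_pos (Finset.mem_range.2 (by omega))]
  ring

/-- Intermediate Abel-type identity: for all positive integers `n` and real `x`,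
`n(n-1)/2 · x^(n-1) = n x^n - n x^(n-1) - ∑_{j=1}^n C(n,j) (x-j)^(n-j+1) j^(j-2)`,
where `j^(j-2)` is interpreted as `j^(j-1)/j`. -/
theorem abel_intermediate (n : ℕ) (hn : 0 < n) (x : ℝ) :
    (n : ℝ) * ((n : ℝ) - 1) / 2 * x ^ (n - 1) =
      (n : ℝ) * x ^ n - (n : ℝ) * x ^ (n - 1) -
        ∑ j ∈ Finset.Icc 1 n,
          (n.choose j : ℝ) * (x - (j : ℝ)) ^ (n - j + 1) *
            ((j : ℝ) ^ (j - 1) / (j : ℝ)) := by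
  by_cases hn1 : n = 1
  · subst hn1
    simp [Finset.Icc_self]
  · have hn2 : 2 ≤ n := by omega
    have key : ∑ j ∈ Finset.Icc 1 n,
        (n.choose j : ℝ) * (x - (j : ℝ)) ^ (n - j + 1) * ((j : ℝ) ^ (j - 1) / (j : ℝ))
        = (∑ j ∈ Icc 1 n, (n.choose j : ℝ) * (x - (j : ℝ)) ^ (n - j) *
            ((j : ℝ) ^ (j - 1) / (j : ℝ))) * x
          - ∑ j ∈ Icc 1 n, (n.choose j : ℝ) * (x - (j : ℝ)) ^ (n - j) * (j : ℝ) ^ (j - 1) := by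
      have hp : ∀ j ∈ Icc 1 n,
          (n.choose j : ℝ) * (x - (j : ℝ)) ^ (n - j + 1) * ((j : ℝ) ^ (j - 1) / (j : ℝ))
            = (n.choose j : ℝ) * (x - (j : ℝ)) ^ (n - j) * ((j : ℝ) ^ (j - 1) / (j : ℝ)) * x
              - (n.choose j : ℝ) * (x - (j : ℝ)) ^ (n - j) * (j : ℝ) ^ (j - 1) := by
        intro j hj
        simp only [Finset.mem_Icc] at hj
        have hj0 : (j : ℝ) ≠ 0 := Nat.cast_ne_zero.2 (by omega)
        rw [pow_succ]
        field_simp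
      rw [Finset.sum_congr rfl hp, Finset.sum_sub_distrib, Finset.sum_mul]
    rw [key, S1 n (by omega) x, S2 n hn2 x, Nat.cast_choose_two]
    have h1 : x ^ (n - 1) * x = x ^ n := by
      rw [← pow_succ]
      congr 1
      omega
    have h2 : x ^ (n - 2) * x = x ^ (n - 1) := by
      rw [← pow_succ]
      congr 1
      omega
    linear_combination (n : ℝ) * h1 - (n : ℝ) * ((n : ℝ) - 1) / 2 * h2
end
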